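/- arXiv:2205.01863 — 3 statements merged into one kernel-verified Lean document; each statement's English description precedes it below -/
import Mathlib

section
/- Let P₀, P₁, …, P_k be probability measures on a common measurable space and let ε₁, …, ε_k ≥ 0 and δ ≥ 0 be such that for each i ∈ {1, …, k}, the pair (P_{i−1}, P_i) is (ε_i, δ)-indistinguishable. Then (P₀, P_k) are (ε₁ + ⋯ + ε_k, δ·(1 + e^{ε₁} + e^{ε₁+ε₂} + ⋯ + e^{ε₁+⋯+ε_{k−1}}))-indistinguishable. -/
open MeasureTheory Finset

def Indist {X : Type*} [MeasurableSpace X] (P Q : Measure X) (ε δ : ℝ) : Prop :=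
  ∀ S : Set X, MeasurableSet S → (P S).toReal ≤ Real.exp ε * (Q S).toReal + δ

namespace Indist

variable {X : Type*} [MeasurableSpace X]

theorem refl (P : Measure X) : Indist P P 0 0 := by
  intro S _
  simp

theorem trans {P Q R : Measure X} {ε ε' δ δ' : ℝ} (hPQ : Indist P Q ε δ)
    (hQR : Indist Q R ε' δ') : Indist P R (ε + ε') (δ + Real.exp ε * δ') := by
  intro S hS
  calc (P S).toReal
      ≤ Real.exp ε * (Q S).toReal + δ := hPQ S hS
    _ ≤ Real.exp ε * (Real.exp ε' * (R S).toReal + δ') + δ := by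
        gcongr
        exact hQR S hS
    _ = Real.exp (ε + ε') * (R S).toReal + (δ + Real.exp ε * δ') := by
        rw [Real.exp_add]
        ring

end Indist

theorem chain_composition_of_indistinguishability_general
    {X : Type*} [MeasurableSpace X] (k : ℕ) (P : ℕ → Measure X)
    (ε : ℕ → ℝ) (δ : ℝ)
    (h : ∀ i < k, Indist (P i) (P (i + 1)) (ε i) δ) :
    Indist (P 0) (P k) (∑ i ∈ range k, ε i)
      (δ * ∑ j ∈ range k, Real.exp (∑ i ∈ range j, ε i)) := by
  induction k with
  | zero => simpa using Indist.refl (P 0)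
  | succ k ih =>
    have hstep := (ih fun i hi => h i (by omega)).trans (h k k.lt_succ_self)
    simp only [sum_range_succ]
    convert hstep using 1
    ring

/-- Chaining `k` indistinguishability guarantees along a path `P 0, P 1, …, P k`:
the endpoints are `(∑ εᵢ, δ·(1 + e^{ε₁} + e^{ε₁+ε₂} + ⋯ + e^{ε₁+⋯+ε_{k−1}}))`-
indistinguishable.  (Here `ε i` is the 0-indexed version of `ε_{i+1}`, so the
additive parameter is `δ · ∑_{j=0}^{k-1} exp (∑_{i<j} ε i)`, whose `j = 0` term
is `1`.) -/
theorem chain_composition_of_indistinguishability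
    {X : Type*} [MeasurableSpace X] (k : ℕ) (P : ℕ → Measure X)
    (hP : ∀ i ≤ k, IsProbabilityMeasure (P i))
    (ε : ℕ → ℝ) (δ : ℝ) (hε : ∀ i < k, 0 ≤ ε i) (hδ : 0 ≤ δ)
    (h : ∀ i < k, Indist (P i) (P (i + 1)) (ε i) δ) :
    Indist (P 0) (P k) (∑ i ∈ range k, ε i)
      (δ * ∑ j ∈ range k, Real.exp (∑ i ∈ range j, ε i)) :=
  chain_composition_of_indistinguishability_general k P ε δ h
end

section
/- Let P₀, P₁, …, P_k be probability measures on a common measurable space, let ε₁, …, ε_k ≥ 0 and δ ≥ 0, and suppose for each i ∈ {1, …, k} the pair (P_{i−1}, P_i) is (ε_i, δ)-indistinguishable. Set ε̃ = ε₁ + ⋯ + ε_k. Then (P₀, P_k) are (ε̃, k·e^{ε̃}·δ)-indistinguishable. -/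
open MeasureTheory Finset

namespace Indist

variable {X : Type*} [MeasurableSpace X]

theorem mono {P Q : Measure X} {ε ε' δ δ' : ℝ} (h : Indist P Q ε δ) (hε : ε ≤ ε') (hδ : δ ≤ δ') :
    Indist P Q ε' δ' := by
  intro S hS
  calc (P S).toReal ≤ Real.exp ε * (Q S).toReal + δ := h S hS
    _ ≤ Real.exp ε' * (Q S).toReal + δ' := by gcongr

theorem chain (k : ℕ) (P : ℕ → Measure X) (ε : ℕ → ℝ) (δ : ℝ)
    (h : ∀ i < k, Indist (P i) (P (i + 1)) (ε i) δ) :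
    Indist (P 0) (P k) (∑ i ∈ range k, ε i)
      (∑ i ∈ range k, Real.exp (∑ j ∈ range i, ε j) * δ) := by
  induction k with
  | zero => simpa using refl (P 0)
  | succ n ih =>
    rw [sum_range_succ, sum_range_succ]
    exact (ih fun i hi => h i (by omega)).trans (h n n.lt_succ_self)

end Indist

theorem sum_exp_partialSum_mul_le {ε : ℕ → ℝ} {δ : ℝ} (k : ℕ) (hε : ∀ i < k, 0 ≤ ε i)
    (hδ : 0 ≤ δ) :
    ∑ i ∈ range k, Real.exp (∑ j ∈ range i, ε j) * δ ≤
      (k : ℝ) * Real.exp (∑ i ∈ range k, ε i) * δ := by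
  have partial_le : ∀ i ∈ range k, Real.exp (∑ j ∈ range i, ε j) * δ ≤
      Real.exp (∑ j ∈ range k, ε j) * δ := by
    intro i hi
    gcongr
    · exact fun j hj _ => hε j (mem_range.mp hj)
    · exact (mem_range.mp hi).le
  calc _ ≤ ∑ _i ∈ range k, Real.exp (∑ j ∈ range k, ε j) * δ := sum_le_sum partial_le
    _ = _ := by rw [sum_const, card_range, nsmul_eq_mul, mul_assoc]

theorem group_confidentiality_chain_general
    {X : Type*} [MeasurableSpace X] (k : ℕ) (P : ℕ → Measure X)
    (ε : ℕ → ℝ) (δ : ℝ) (hε : ∀ i < k, 0 ≤ ε i) (hδ : 0 ≤ δ)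
    (h : ∀ i < k, Indist (P i) (P (i + 1)) (ε i) δ) :
    Indist (P 0) (P k) (∑ i ∈ range k, ε i)
      ((k : ℝ) * Real.exp (∑ i ∈ range k, ε i) * δ) :=
  (Indist.chain k P ε δ h).mono le_rfl (sum_exp_partialSum_mul_le k hε hδ)

/-- Group confidentiality bound: a chain of `k` single-secret `(εᵢ, δ)` guarantees
yields a `(ε̃, k·e^{ε̃}·δ)` guarantee between the endpoints, where `ε̃ = ∑ᵢ εᵢ`. -/
theorem group_confidentiality_chain
    {X : Type*} [MeasurableSpace X] (k : ℕ) (P : ℕ → Measure X)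
    (hP : ∀ i ≤ k, IsProbabilityMeasure (P i))
    (ε : ℕ → ℝ) (δ : ℝ) (hε : ∀ i < k, 0 ≤ ε i) (hδ : 0 ≤ δ)
    (h : ∀ i < k, Indist (P i) (P (i + 1)) (ε i) δ) :
    Indist (P 0) (P k) (∑ i ∈ range k, ε i)
      ((k : ℝ) * Real.exp (∑ i ∈ range k, ε i) * δ) :=
  group_confidentiality_chain_general k P ε δ hε hδ h
end

section
/- Let μ, ν₁, ν₂ be probability measures on a common measurable space, let γ ∈ (0, 1] and ε ≥ 0. Set α = e^ε, α′ = 1 + γ(e^ε − 1), and β = α′/α = (1 + γ(e^ε − 1))/e^ε. Then H_{α′}((1−γ)μ + γν₁ ‖ (1−γ)μ + γν₂) = γ · H_{α}(ν₁ ‖ (1−β)μ + βν₂), where for probability measures P, Q and α ≥ 0, H_α(P‖Q) = sup over measurable sets S of (P(S) − α·Q(S)), and (1−γ)μ + γν denotes the mixture probability measure assigning mass (1−γ)μ(S) + γν(S) to each measurable set S. -/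
open MeasureTheory

/-- Hockey-stick divergence `H_α(P‖Q) = sup_{S measurable} (P(S) − α·Q(S))`. -/
noncomputable def hsDiv {X : Type*} [MeasurableSpace X] (α : ℝ) (P Q : Measure X) : ℝ :=
  ⨆ S : {S : Set X // MeasurableSet S}, ((P S.1).toReal - α * (Q S.1).toReal)

/-- The mixture measure `(1−γ)·μ + γ·ν`. -/
noncomputable def mix {X : Type*} [MeasurableSpace X] (γ : ℝ) (μ ν : Measure X) : Measure X :=
  ENNReal.ofReal (1 - γ) • μ + ENNReal.ofReal γ • ν

lemma mix_apply_toReal {X : Type*} [MeasurableSpace X] (t : ℝ) (ht0 : 0 ≤ t) (ht1 : t ≤ 1)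
    (ρ σ : Measure X) [IsFiniteMeasure ρ] [IsFiniteMeasure σ] (S : Set X) :
    ((mix t ρ σ) S).toReal = (1 - t) * (ρ S).toReal + t * (σ S).toReal := by
  have h1 : (0:ℝ) ≤ 1 - t := by linarith
  simp only [mix, Measure.add_apply, Measure.smul_apply, smul_eq_mul]
  rw [ENNReal.toReal_add (ENNReal.mul_ne_top ENNReal.ofReal_ne_top (measure_ne_top _ _))
    (ENNReal.mul_ne_top ENNReal.ofReal_ne_top (measure_ne_top _ _)),
    ENNReal.toReal_mul, ENNReal.toReal_mul, ENNReal.toReal_ofReal h1,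
    ENNReal.toReal_ofReal ht0]

/-- Advanced joint convexity (Balle–Barthe–Gaboardi):
`H_{α′}((1−γ)μ + γν₁ ‖ (1−γ)μ + γν₂) = γ · H_α(ν₁ ‖ (1−β)μ + βν₂)`
where `α = e^ε`, `α′ = 1 + γ(e^ε − 1)` and `β = α′/α`. -/
theorem advanced_joint_convexity
    {X : Type*} [MeasurableSpace X] (μ ν₁ ν₂ : Measure X)
    [IsProbabilityMeasure μ] [IsProbabilityMeasure ν₁] [IsProbabilityMeasure ν₂]
    (γ ε α α' β : ℝ) (hγ0 : 0 < γ) (hγ1 : γ ≤ 1) (hε : 0 ≤ ε)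
    (hα : α = Real.exp ε) (hα' : α' = 1 + γ * (Real.exp ε - 1)) (hβ : β = α' / α) :
    hsDiv α' (mix γ μ ν₁) (mix γ μ ν₂) = γ * hsDiv α ν₁ (mix β μ ν₂) := by
  have hα1 : 1 ≤ α := hα ▸ Real.one_le_exp hε
  have hαpos : (0:ℝ) < α := lt_of_lt_of_le one_pos hα1
  have hα'1 : 1 ≤ α' := by
    rw [hα']; nlinarith [Real.one_le_exp hε]
  have hα'le : α' ≤ α := by
    rw [hα', hα]; nlinarith [Real.one_le_exp hε]
  have hβ0 : 0 ≤ β := by rw [hβ]; positivity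
  have hβ1 : β ≤ 1 := by rw [hβ]; exact div_le_one_of_le₀ hα'le hαpos.le
  have key : ∀ S : Set X,
      ((mix γ μ ν₁) S).toReal - α' * ((mix γ μ ν₂) S).toReal
        = γ * ((ν₁ S).toReal - α * ((mix β μ ν₂) S).toReal) := by
    intro S
    rw [mix_apply_toReal γ hγ0.le hγ1, mix_apply_toReal γ hγ0.le hγ1,
      mix_apply_toReal β hβ0 hβ1]
    subst hβ hα' hα
    have hne : Real.exp ε ≠ 0 := (Real.exp_pos ε).ne'
    field_simp
    ring
  unfold hsDiv
  rw [iSup_congr (fun S : {S : Set X // MeasurableSet S} => key S.1),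
    Real.mul_iSup_of_nonneg hγ0.le]
end
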